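/- arXiv:1109.2452 — 4 statements merged into one kernel-verified Lean document; each statement's English description precedes it below -/
import Mathlib

section
/- Let g be a restricted Lie algebra over a field k of characteristic p > 2, M an abelian restricted Lie algebra with restricted g-operation, E a restricted Lie algebra extension of M by g with quotient map φ, and γ : E → E' a Lie algebra isomorphism onto another restricted extension fixing M pointwise with φ'∘γ = φ. Then for e ∈ E, the element γ(e^[p]) − (γ(e))^[p] depends only on φ(e). -/
/-!
Write `e₂ = ι m + e₁`. Because `ι M` is an abelian ideal, every term of Jacobson's formula
involving `ι m` at least twice vanishes, leaving
`(ι m + e)^[p] = (ι m)^[p] + e^[p] + (ad e)^{p-1} (ι m)` in `E` and likewise in `E'`.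
Since `γ` fixes `M` and intertwines `ad e₁` with `ad (γ e₁)`, the contributions of `m` to
`γ (e₂^[p])` and to `(γ e₂)^[p]` coincide and cancel in the difference.
-/

open TensorProduct

/-- The linear map extracting the `n`-th coefficient of an element of `k[λ] ⊗ g`. -/
noncomputable def jacobsonCoeff (k : Type*) [CommRing k] (g : Type*) [AddCommGroup g]
    [Module k g] (n : ℕ) : (Polynomial k ⊗[k] g) →ₗ[k] g :=
  (TensorProduct.lid k g).toLinearMap.comp (LinearMap.rTensor g (Polynomial.lcoeff k n))

/-- `jacobsonS k p g x y i` is the element `sᵢ(x,y)` of `g` determined by the requirement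
that `i·sᵢ(x,y)` is the coefficient of `λ^{i-1}` in `(ad(λx+y))^{p-1}(x)`, computed in the
base change `k[λ] ⊗ g`. -/
noncomputable def jacobsonS (k : Type*) [Field k] (p : ℕ) (g : Type*) [LieRing g]
    [LieAlgebra k g] (x y : g) (i : ℕ) : g :=
  ((i : k)⁻¹) • jacobsonCoeff k g (i - 1)
    (((LieAlgebra.ad (Polynomial k) (Polynomial k ⊗[k] g)
        (Polynomial.X ⊗ₜ[k] x + 1 ⊗ₜ[k] y)) ^ (p - 1)) (1 ⊗ₜ[k] x))

/-- `P` is a `p`-operation on the Lie algebra `g` over `k`: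
`(c•x)^[p] = c^p • x^[p]`, `ad(x^[p]) = (ad x)^p`, and the Jacobson formula
`(x+y)^[p] = x^[p] + y^[p] + ∑_{i=1}^{p-1} sᵢ(x,y)`. -/
def IsPOperation (k : Type*) [Field k] (p : ℕ) (g : Type*) [LieRing g] [LieAlgebra k g]
    (P : g → g) : Prop :=
  (∀ (c : k) (x : g), P (c • x) = c ^ p • P x) ∧
  (∀ x y : g, ⁅P x, y⁆ = ((LieAlgebra.ad k g x) ^ p) y) ∧
  (∀ x y : g, P (x + y) = P x + P y + ∑ i ∈ Finset.Icc 1 (p - 1), jacobsonS k p g x y i)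

open LieAlgebra

lemma LieHom.ad_pow_apply_map {R L L' : Type*} [CommRing R] [LieRing L] [LieAlgebra R L]
    [LieRing L'] [LieAlgebra R L'] (f : L →ₗ⁅R⁆ L') (x y : L) (n : ℕ) :
    (ad R L' (f x) ^ n) (f y) = f ((ad R L x ^ n) y) := by
  have hcomm : (ad R L' (f x)).comp (f : L →ₗ[R] L') = (f : L →ₗ[R] L').comp (ad R L x) := by
    ext z
    simp
  exact LinearMap.congr_fun (Module.End.commute_pow_left_of_commute hcomm n) y

section Jacobson

variable {k g : Type*} [LieRing g]

lemma ad_X_tmul_add_one_tmul_pow_apply [CommRing k] [LieAlgebra k g] {x y : g}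
    (h : ∀ j : ℕ, ⁅x, (ad k g y ^ j) x⁆ = 0) (n : ℕ) :
    (ad (Polynomial k) (Polynomial k ⊗[k] g) (Polynomial.X ⊗ₜ[k] x + 1 ⊗ₜ[k] y) ^ n)
        (1 ⊗ₜ[k] x) = 1 ⊗ₜ[k] ((ad k g y ^ n) x) := by
  induction n with
  | zero => simp
  | succ n ih =>
    rw [pow_succ', Module.End.mul_apply, ih, pow_succ', Module.End.mul_apply, ad_apply,
      ad_apply, add_lie, ExtendScalars.bracket_tmul, ExtendScalars.bracket_tmul, h n,
      tmul_zero, zero_add, one_mul]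

variable [Field k] [LieAlgebra k g]

lemma jacobsonS_of_forall_lie_ad_pow_eq_zero (p : ℕ) {x y : g}
    (h : ∀ j : ℕ, ⁅x, (ad k g y ^ j) x⁆ = 0) (i : ℕ) :
    jacobsonS k p g x y i = if i = 1 then (ad k g y ^ (p - 1)) x else 0 := by
  rw [jacobsonS, ad_X_tmul_add_one_tmul_pow_apply h, jacobsonCoeff]
  simp only [LinearMap.comp_apply, LinearMap.rTensor_tmul, Polynomial.lcoeff_apply,
    LinearEquiv.coe_toLinearMap, lid_tmul, Polynomial.coeff_one]
  rcases eq_or_ne i 1 with rfl | hi1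
  · simp
  · rcases eq_or_ne i 0 with rfl | hi0
    · simp
    · simp [show i - 1 ≠ 0 by omega, hi1]

lemma IsPOperation.map_add_of_forall_lie_ad_pow_eq_zero {p : ℕ} {P : g → g}
    (hP : IsPOperation k p g P) (hp : 2 ≤ p) {x y : g}
    (h : ∀ j : ℕ, ⁅x, (ad k g y ^ j) x⁆ = 0) :
    P (x + y) = P x + P y + (ad k g y ^ (p - 1)) x := by
  have h1 : 1 ∈ Finset.Icc 1 (p - 1) := Finset.mem_Icc.mpr ⟨le_rfl, by omega⟩
  simp_rw [hP.2.2, jacobsonS_of_forall_lie_ad_pow_eq_zero p h, Finset.sum_ite_eq',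
    if_pos h1]

lemma IsPOperation.map_apply_add_of_isAbelian {M : Type*} [AddCommGroup M] [Module k M]
    {p : ℕ} {P : g → g} (hP : IsPOperation k p g P) (hp : 2 ≤ p) {ι : M →ₗ[k] g}
    (habel : ∀ m m' : M, ⁅ι m, ι m'⁆ = 0) {y : g} (hy : ∀ m : M, ⁅y, ι m⁆ ∈ Set.range ι)
    (m : M) : P (ι m + y) = P (ι m) + P y + (ad k g y ^ (p - 1)) (ι m) := by
  refine hP.map_add_of_forall_lie_ad_pow_eq_zero hp fun j ↦ ?_
  obtain ⟨m', hm'⟩ : (ad k g y ^ j) (ι m) ∈ LinearMap.range ι :=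
    Module.End.pow_apply_mem_of_forall_mem j (by rintro _ ⟨m', rfl⟩; exact hy m') _ ⟨m, rfl⟩
  rw [← hm', habel]

end Jacobson

theorem stmt13_general (k : Type*) [Field k] (p : ℕ) [Fact p.Prime]
    (g : Type*) [LieRing g] [LieAlgebra k g]
    (E : Type*) [LieRing E] [LieAlgebra k E] (PE : E → E) (hPE : IsPOperation k p E PE)
    (E' : Type*) [LieRing E'] [LieAlgebra k E'] (PE' : E' → E') (hPE' : IsPOperation k p E' PE')
    -- `M` is an abelian restricted Lie algebra with `p`-map `PM`
    (M : Type*) [AddCommGroup M] [Module k M] (PM : M → M)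
    -- `M` embeds as the kernel of `φ : E → g`; the embedded copy is an abelian
    -- restricted ideal
    (ι : M →ₗ[k] E)
    (φ : E →ₗ⁅k⁆ g)
    (hker : ∀ e : E, φ e = 0 ↔ e ∈ Set.range ι)
    (habel : ∀ m m' : M, ⁅ι m, ι m'⁆ = 0)
    (hideal : ∀ (e : E) (m : M), ⁅e, ι m⁆ ∈ Set.range ι)
    (hres : ∀ m : M, PE (ι m) = ι (PM m))
    -- and likewise in `E'`
    (ι' : M →ₗ[k] E')
    (habel' : ∀ m m' : M, ⁅ι' m, ι' m'⁆ = 0)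
    (hideal' : ∀ (e : E') (m : M), ⁅e, ι' m⁆ ∈ Set.range ι')
    (hres' : ∀ m : M, PE' (ι' m) = ι' (PM m))
    -- `γ` is a similarity isomorphism
    (γ : E →ₗ⁅k⁆ E')
    (hfix : ∀ m : M, γ (ι m) = ι' m) :
    ∀ e₁ e₂ : E, φ e₁ = φ e₂ →
      γ (PE e₁) - PE' (γ e₁) = γ (PE e₂) - PE' (γ e₂) := by
  intro e₁ e₂ hφ
  obtain ⟨m, hm⟩ := (hker (e₂ - e₁)).mp (by rw [map_sub, hφ, sub_self])
  obtain rfl : e₂ = ι m + e₁ := by rw [hm, sub_add_cancel]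
  have hp : 2 ≤ p := (Fact.out : p.Prime).two_le
  have hγ : γ ((ad k E e₁ ^ (p - 1)) (ι m)) = (ad k E' (γ e₁) ^ (p - 1)) (ι' m) := by
    rw [← hfix, γ.ad_pow_apply_map]
  have hγ₂ : γ (ι m + e₁) = ι' m + γ e₁ := by rw [map_add, hfix]
  rw [hγ₂, hPE.map_apply_add_of_isAbelian hp habel (hideal e₁),
    hPE'.map_apply_add_of_isAbelian hp habel' (hideal' (γ e₁)), hres, hres', map_add, map_add,
    hfix, hγ]
  abel

/-- Let `(E,φ)` and `(E',φ')` be restricted extensions of the abelian restricted Lie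
algebra `M` by the restricted Lie algebra `g`, and `γ : E → E'` a (not necessarily
restricted) Lie algebra isomorphism fixing `M` pointwise with `φ'∘γ = φ`.  Then for
`e ∈ E` the element `γ(e^[p]) - (γ(e))^[p]` depends only on `φ(e)`. -/
theorem stmt13 (k : Type*) [Field k] (p : ℕ) [Fact p.Prime] (hp : 2 < p) [CharP k p]
    (g : Type*) [LieRing g] [LieAlgebra k g] (P : g → g) (hP : IsPOperation k p g P)
    (E : Type*) [LieRing E] [LieAlgebra k E] (PE : E → E) (hPE : IsPOperation k p E PE)
    (E' : Type*) [LieRing E'] [LieAlgebra k E'] (PE' : E' → E') (hPE' : IsPOperation k p E' PE')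
    -- `M` is an abelian restricted Lie algebra with `p`-map `PM`
    (M : Type*) [AddCommGroup M] [Module k M] (PM : M → M)
    -- `M` embeds as the kernel of `φ : E → g`; the embedded copy is an abelian
    -- restricted ideal
    (ι : M →ₗ[k] E) (hinj : Function.Injective ι)
    (φ : E →ₗ⁅k⁆ g) (hsurj : Function.Surjective φ)
    (hker : ∀ e : E, φ e = 0 ↔ e ∈ Set.range ι)
    (habel : ∀ m m' : M, ⁅ι m, ι m'⁆ = 0)
    (hideal : ∀ (e : E) (m : M), ⁅e, ι m⁆ ∈ Set.range ι)
    (hres : ∀ m : M, PE (ι m) = ι (PM m))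
    (hPφ : ∀ e : E, φ (PE e) = P (φ e))
    -- and likewise in `E'`
    (ι' : M →ₗ[k] E') (hinj' : Function.Injective ι')
    (φ' : E' →ₗ⁅k⁆ g) (hsurj' : Function.Surjective φ')
    (hker' : ∀ e : E', φ' e = 0 ↔ e ∈ Set.range ι')
    (habel' : ∀ m m' : M, ⁅ι' m, ι' m'⁆ = 0)
    (hideal' : ∀ (e : E') (m : M), ⁅e, ι' m⁆ ∈ Set.range ι')
    (hres' : ∀ m : M, PE' (ι' m) = ι' (PM m))
    (hPφ' : ∀ e : E', φ' (PE' e) = P (φ' e))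
    -- `γ` is a similarity isomorphism
    (γ : E →ₗ⁅k⁆ E') (hbij : Function.Bijective γ)
    (hfix : ∀ m : M, γ (ι m) = ι' m) (hcom : ∀ e : E, φ' (γ e) = φ e) :
    ∀ e₁ e₂ : E, φ e₁ = φ e₂ →
      γ (PE e₁) - PE' (γ e₁) = γ (PE e₂) - PE' (γ e₂) :=
  stmt13_general k p g E PE hPE E' PE' hPE' M PM ι φ hker habel hideal hres ι' habel' hideal' hres'
    γ hfix
end

section
/- With the hypotheses of the previous statement, the induced map g : g₀ → M (where g(φ(e)) = γ(e^[p]) − (γ(e))^[p]) is p-semilinear and takes values in the invariants M^g = {m ∈ M : x·m = 0 for all x ∈ g}. -/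
open TensorProduct

/-! A Lie homomorphism `γ` intertwines `ad`-powers, hence also the Jacobson polynomials `sᵢ`
(computed after extending scalars to `k[λ]`). So in `D e = γ(e^[p]) - (γ e)^[p]` the correction
terms of Jacobson's formula cancel and `D` is `p`-semilinear; and `ad(e^[p]) = (ad e)^p` on both
sides gives `⁅γ f, γ(e^[p])⁆ = ⁅γ f, (γ e)^[p]⁆`, so `D e` centralizes `γ(E) = E'`. -/

lemma map_ad_pow_apply {R : Type*} [CommRing R] {L L' : Type*} [LieRing L] [LieAlgebra R L]
    [LieRing L'] [LieAlgebra R L'] (f : L → L') (hf : ∀ a b, f ⁅a, b⁆ = ⁅f a, f b⁆)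
    (a b : L) (n : ℕ) : f ((LieAlgebra.ad R L a ^ n) b) = (LieAlgebra.ad R L' (f a) ^ n) (f b) := by
  induction n with
  | zero => rfl
  | succ n ih => simp only [pow_succ', Module.End.mul_apply, LieAlgebra.ad_apply, hf, ih]

namespace LieHom

variable {k : Type*} [Field k] {p : ℕ} {L L' : Type*} [LieRing L] [LieAlgebra k L]
  [LieRing L'] [LieAlgebra k L'] {PL : L → L} {PL' : L' → L'}

lemma jacobsonCoeff_extendScalars_map (f : L →ₗ⁅k⁆ L') (n : ℕ) (t : Polynomial k ⊗[k] L) :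
    jacobsonCoeff k L' n (LieAlgebra.ExtendScalars.map (AlgHom.id k (Polynomial k)) f t) =
      f (jacobsonCoeff k L n t) := by
  induction t using TensorProduct.induction_on with
  | zero => simp
  | tmul r x => simp [jacobsonCoeff]
  | add t₁ t₂ h₁ h₂ => simp only [map_add, h₁, h₂]

lemma map_jacobsonS (f : L →ₗ⁅k⁆ L') (x y : L) (i : ℕ) :
    f (jacobsonS k p L x y i) = jacobsonS k p L' (f x) (f y) i := by
  let F := LieAlgebra.ExtendScalars.map (AlgHom.id k (Polynomial k)) f
  have hF := map_ad_pow_apply (R := Polynomial k) F (fun a b ↦ F.map_lie a b)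
    (Polynomial.X ⊗ₜ[k] x + 1 ⊗ₜ[k] y) (1 ⊗ₜ[k] x) (p - 1)
  rw [jacobsonS, jacobsonS, map_smul, ← jacobsonCoeff_extendScalars_map, hF]
  simp [F]

def pDefect (f : L →ₗ⁅k⁆ L') (PL : L → L) (PL' : L' → L') (x : L) : L' :=
  f (PL x) - PL' (f x)

lemma pDefect_smul_add (hPL : IsPOperation k p L PL) (hPL' : IsPOperation k p L' PL')
    (f : L →ₗ⁅k⁆ L') (c : k) (x y : L) :
    f.pDefect PL PL' (c • x + y) = c ^ p • f.pDefect PL PL' x + f.pDefect PL PL' y := by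
  have hsource : f (PL (c • x + y)) = c ^ p • f (PL x) + f (PL y) +
      ∑ i ∈ Finset.Icc 1 (p - 1), jacobsonS k p L' (c • f x) (f y) i := by
    simp only [hPL.2.2, hPL.1, map_add, map_smul, map_sum, f.map_jacobsonS]
  have htarget : PL' (f (c • x + y)) = c ^ p • PL' (f x) + PL' (f y) +
      ∑ i ∈ Finset.Icc 1 (p - 1), jacobsonS k p L' (c • f x) (f y) i := by
    rw [map_add, map_smul, hPL'.2.2, hPL'.1]
  rw [pDefect, pDefect, pDefect, hsource, htarget, smul_sub]
  abel

lemma lie_pDefect (hPL : IsPOperation k p L PL) (hPL' : IsPOperation k p L' PL')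
    (f : L →ₗ⁅k⁆ L') (x y : L) : ⁅f y, f.pDefect PL PL' x⁆ = 0 := by
  rw [pDefect, lie_sub, ← f.map_lie, sub_eq_zero, ← lie_skew, hPL.2.1, ← lie_skew, hPL'.2.1,
    map_neg, map_ad_pow_apply f f.map_lie]

end LieHom

theorem stmt14_general (k : Type*) [Field k] (p : ℕ)
    (g : Type*) [LieRing g] [LieAlgebra k g]
    (E : Type*) [LieRing E] [LieAlgebra k E] (PE : E → E) (hPE : IsPOperation k p E PE)
    (E' : Type*) [LieRing E'] [LieAlgebra k E'] (PE' : E' → E') (hPE' : IsPOperation k p E' PE')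
    (M : Type*) [AddCommGroup M] [Module k M]
    (φ : E →ₗ⁅k⁆ g) (hsurj : Function.Surjective φ)
    (ι' : M →ₗ[k] E') (hinj' : Function.Injective ι')
    (γ : E →ₗ⁅k⁆ E') (hbij : Function.Bijective γ)
    -- the map `G` induced by `e ↦ γ(e^[p]) - (γ(e))^[p]`
    (G : g → M) (hG : ∀ e : E, ι' (G (φ e)) = γ (PE e) - PE' (γ e)) :
    (∀ (c : k) (x y : g), G (c • x + y) = c ^ p • G x + G y) ∧
      (∀ (e' : E') (x : g), ⁅e', ι' (G x)⁆ = 0) := by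
  have hD : ∀ e, ι' (G (φ e)) = γ.pDefect PE PE' e := hG
  refine ⟨fun c x y ↦ ?_, fun e' x ↦ ?_⟩
  · obtain ⟨e, rfl⟩ := hsurj x
    obtain ⟨f, rfl⟩ := hsurj y
    apply hinj'
    rw [← map_smul, ← map_add, hD, γ.pDefect_smul_add hPE hPE', map_add, map_smul, hD, hD]
  · obtain ⟨e, rfl⟩ := hsurj x
    obtain ⟨f, rfl⟩ := hbij.2 e'
    rw [hD, γ.lie_pDefect hPE hPE']

/-- With the hypotheses of the previous statement, the induced map `G : g → M`
(`ι'(G(φ(e))) = γ(e^[p]) - (γ(e))^[p]`) is `p`-semilinear and takes values in the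
invariants `M^g = {m : x·m = 0 for all x}` (the `g`-action on `M` being induced by
the adjoint action of the ambient algebra). -/
theorem stmt14 (k : Type*) [Field k] (p : ℕ) [Fact p.Prime] (hp : 2 < p) [CharP k p]
    (g : Type*) [LieRing g] [LieAlgebra k g] (P : g → g) (hP : IsPOperation k p g P)
    (E : Type*) [LieRing E] [LieAlgebra k E] (PE : E → E) (hPE : IsPOperation k p E PE)
    (E' : Type*) [LieRing E'] [LieAlgebra k E'] (PE' : E' → E') (hPE' : IsPOperation k p E' PE')
    (M : Type*) [AddCommGroup M] [Module k M] (PM : M → M)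
    (ι : M →ₗ[k] E) (hinj : Function.Injective ι)
    (φ : E →ₗ⁅k⁆ g) (hsurj : Function.Surjective φ)
    (hker : ∀ e : E, φ e = 0 ↔ e ∈ Set.range ι)
    (habel : ∀ m m' : M, ⁅ι m, ι m'⁆ = 0)
    (hideal : ∀ (e : E) (m : M), ⁅e, ι m⁆ ∈ Set.range ι)
    (hres : ∀ m : M, PE (ι m) = ι (PM m))
    (hPφ : ∀ e : E, φ (PE e) = P (φ e))
    (ι' : M →ₗ[k] E') (hinj' : Function.Injective ι')
    (φ' : E' →ₗ⁅k⁆ g) (hsurj' : Function.Surjective φ')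
    (hker' : ∀ e : E', φ' e = 0 ↔ e ∈ Set.range ι')
    (habel' : ∀ m m' : M, ⁅ι' m, ι' m'⁆ = 0)
    (hideal' : ∀ (e : E') (m : M), ⁅e, ι' m⁆ ∈ Set.range ι')
    (hres' : ∀ m : M, PE' (ι' m) = ι' (PM m))
    (hPφ' : ∀ e : E', φ' (PE' e) = P (φ' e))
    (γ : E →ₗ⁅k⁆ E') (hbij : Function.Bijective γ)
    (hfix : ∀ m : M, γ (ι m) = ι' m) (hcom : ∀ e : E, φ' (γ e) = φ e)
    -- the map `G` induced by `e ↦ γ(e^[p]) - (γ(e))^[p]`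
    (G : g → M) (hG : ∀ e : E, ι' (G (φ e)) = γ (PE e) - PE' (γ e)) :
    (∀ (c : k) (x y : g), G (c • x + y) = c ^ p • G x + G y) ∧
      (∀ (e' : E') (x : g), ⁅e', ι' (G x)⁆ = 0) :=
  stmt14_general k p g E PE hPE E' PE' hPE' M φ hsurj ι' hinj' γ hbij G hG
end

section
/- Let g be a restricted Lie algebra over k of characteristic p > 2 and M an abelian restricted Lie algebra with a restricted g-operation. Every restricted extension (E, φ) of M by g is similar to a restricted extension in which M is strongly abelian; concretely, extending the p-semilinear map m ↦ m^[p] (which maps M into the center of E) to a p-semilinear map s : E → C(E) and replacing the p-operation of E by [p] − s yields a new p-operation on E under which M becomes strongly abelian. -/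
open TensorProduct

/-!
Since `M` is an abelian ideal, `(ad m)² = 0` for `m ∈ M`, so `ad(m^[p]) = (ad m)^p = 0` and
`m^[p]` is central. Subtracting a central `p`-semilinear map `s` from a `p`-operation changes
neither `ad(x^[p])` nor the Jacobson formula (whose correction terms do not involve the
`p`-map), so `[p] - s` is again a `p`-operation; it vanishes on `M` because `s` extends `[p]|_M`.
-/

section Semilinear

variable {k : Type*} [Semiring k] {p : ℕ} {E : Type*} [AddCommGroup E] [Module k E] {s : E → E}

theorem map_zero_of_semilinear
    (hsemi : ∀ (c : k) (x y : E), s (c • x + y) = c ^ p • s x + s y) : s 0 = 0 := by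
  have h := hsemi 1 0 0
  rwa [one_smul, one_pow, one_smul, add_zero, left_eq_add] at h

theorem map_add_of_semilinear
    (hsemi : ∀ (c : k) (x y : E), s (c • x + y) = c ^ p • s x + s y)
    (x y : E) : s (x + y) = s x + s y := by
  simpa only [one_smul, one_pow] using hsemi 1 x y

theorem map_smul_of_semilinear
    (hsemi : ∀ (c : k) (x y : E), s (c • x + y) = c ^ p • s x + s y)
    (c : k) (x : E) : s (c • x) = c ^ p • s x := by
  simpa only [add_zero, map_zero_of_semilinear hsemi] using hsemi c x 0

end Semilinear

theorem LieIdeal.ad_pow_eq_zero_of_abelian {R L : Type*} [CommRing R] [LieRing L]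
    [LieAlgebra R L] {M : LieIdeal R L}
    (habel : ∀ m m' : L, m ∈ M → m' ∈ M → ⁅m, m'⁆ = 0)
    {m : L} (hm : m ∈ M) {n : ℕ} (hn : 2 ≤ n) : LieAlgebra.ad R L m ^ n = 0 := by
  obtain ⟨q, rfl⟩ := Nat.exists_eq_add_of_le' hn
  have hsq : LieAlgebra.ad R L m ^ 2 = 0 := by
    ext z
    exact habel m ⁅m, z⁆ hm (lie_mem_left R L M m z hm)
  rw [pow_add, hsq, mul_zero]

section Restricted

variable {k : Type*} [Field k] {p : ℕ} {E : Type*} [LieRing E] [LieAlgebra k E]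

namespace IsPOperation

theorem lie_eq_zero_of_mem_abelian {P : E → E} (hP : IsPOperation k p E P) (hp : 2 ≤ p)
    {M : LieIdeal k E} (habel : ∀ m m' : E, m ∈ M → m' ∈ M → ⁅m, m'⁆ = 0)
    {m : E} (hm : m ∈ M) (z : E) : ⁅P m, z⁆ = 0 := by
  rw [hP.2.1, LieIdeal.ad_pow_eq_zero_of_abelian habel hm hp, LinearMap.zero_apply]

theorem sub_of_semilinear_central {P s : E → E} (hP : IsPOperation k p E P)
    (hsemi : ∀ (c : k) (x y : E), s (c • x + y) = c ^ p • s x + s y)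
    (hcenter : ∀ x z : E, ⁅s x, z⁆ = 0) :
    IsPOperation k p E (fun x => P x - s x) := by
  obtain ⟨hsmul, had, hadd⟩ := hP
  refine ⟨fun c x => ?_, fun x y => ?_, fun x y => ?_⟩
  · dsimp only
    rw [hsmul, map_smul_of_semilinear hsemi, smul_sub]
  · rw [sub_lie, hcenter, sub_zero, had]
  · dsimp only
    rw [hadd, map_add_of_semilinear hsemi]
    abel

end IsPOperation

end Restricted

theorem stmt15_general (k : Type*) [Field k] (p : ℕ) (hp : 2 < p)
    (E : Type*) [LieRing E] [LieAlgebra k E] (PE : E → E) (hPE : IsPOperation k p E PE)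
    (M : LieIdeal k E)
    (habel : ∀ m m' : E, m ∈ M → m' ∈ M → ⁅m, m'⁆ = 0)
    -- `s` is a `p`-semilinear map from `E` to the center `C(E)` extending `m ↦ m^[p]`
    (s : E → E)
    (hsemi : ∀ (c : k) (x y : E), s (c • x + y) = c ^ p • s x + s y)
    (hcenter : ∀ x z : E, ⁅s x, z⁆ = 0)
    (hext : ∀ m : E, m ∈ M → s m = PE m) :
    -- `[p]` maps `M` into the center of `E`
    (∀ m : E, m ∈ M → ∀ z : E, ⁅PE m, z⁆ = 0) ∧
    -- `[p] - s` is a new `p`-operation on `E`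
    IsPOperation k p E (fun x => PE x - s x) ∧
    -- under which `M` is strongly abelian
    (∀ m : E, m ∈ M → PE m - s m = 0) :=
  ⟨fun _ hm => hPE.lie_eq_zero_of_mem_abelian hp.le habel hm,
    hPE.sub_of_semilinear_central hsemi hcenter,
    fun m hm => by rw [hext m hm, sub_self]⟩

/-- Every restricted extension `(E,φ)` of `M` by `g` is similar to one in which `M`
is strongly abelian: the `p`-map sends the abelian ideal `M` into the center of `E`
and is `p`-semilinear there; extending it to a `p`-semilinear map `s : E → C(E)`,
the map `[p] - s` is again a `p`-operation on `E`, and for it the `p`-map vanishes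
on `M`, i.e. `M` becomes strongly abelian. -/
theorem stmt15 (k : Type*) [Field k] (p : ℕ) [Fact p.Prime] (hp : 2 < p) [CharP k p]
    (E : Type*) [LieRing E] [LieAlgebra k E] (PE : E → E) (hPE : IsPOperation k p E PE)
    (M : LieIdeal k E)
    (habel : ∀ m m' : E, m ∈ M → m' ∈ M → ⁅m, m'⁆ = 0)
    (hMres : ∀ m : E, m ∈ M → PE m ∈ M)
    -- `s` is a `p`-semilinear map from `E` to the center `C(E)` extending `m ↦ m^[p]`
    (s : E → E)
    (hsemi : ∀ (c : k) (x y : E), s (c • x + y) = c ^ p • s x + s y)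
    (hcenter : ∀ x z : E, ⁅s x, z⁆ = 0)
    (hext : ∀ m : E, m ∈ M → s m = PE m) :
    -- `[p]` maps `M` into the center of `E`
    (∀ m : E, m ∈ M → ∀ z : E, ⁅PE m, z⁆ = 0) ∧
    -- `[p] - s` is a new `p`-operation on `E`
    IsPOperation k p E (fun x => PE x - s x) ∧
    -- under which `M` is strongly abelian
    (∀ m : E, m ∈ M → PE m - s m = 0) :=
  stmt15_general k p hp E PE hPE M habel s hsemi hcenter hext
end

section
/- For σ ∈ S_n and 0 ≤ n₀ ≤ n, define sgn(σ(n₀|n)) = (−1)^{σ̄(1)+⋯+σ̄(n)} where σ̄(i) = #{ j ∈ {1,…,n₀} : j ∉ {σ(1),…,σ(i−1)} and j < σ(i) }. Then sgn(σ(n|n)) = sgn(σ), the usual sign of the permutation σ. -/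
/-!
For `n₀ = n` the condition `j ≤ n₀` is vacuous, and the values `j < σ(i)` not yet taken by
`σ(1), …, σ(i-1)` are exactly the values `σ(k)` with `k > i` and `σ(k) < σ(i)`. So `σ̄(i)` is the
`i`-th entry of the Lehmer code of `σ`, and `∑ σ̄(i)` is the number of inversions of `σ`, whose
parity is the sign.
-/

open Finset

namespace Equiv.Perm

section LinearOrder

variable {α : Type*} [Fintype α] [LinearOrder α]

def lehmerCode (σ : Perm α) (i : α) : ℕ := #{k | i < k ∧ σ k < σ i}

theorem card_unvisited_lt_eq_lehmerCode (σ : Perm α) (i : α) :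
    #{j | j < σ i ∧ ∀ l < i, σ l ≠ j} = σ.lehmerCode i := by
  conv_rhs => rw [lehmerCode, ← card_map σ.toEmbedding]
  congr 1
  ext j
  simp only [mem_filter, mem_univ, true_and, mem_map_equiv]
  obtain ⟨k, rfl⟩ := σ.surjective j
  simp only [symm_apply_apply, σ.injective.ne_iff]
  constructor
  · rintro ⟨hlt, hk⟩
    have hik : i ≤ k := not_lt.1 fun h => hk k h rfl
    exact ⟨hik.lt_of_ne (by rintro rfl; exact lt_irrefl _ hlt), hlt⟩
  · rintro ⟨hik, hlt⟩
    exact ⟨hlt, fun l hl => (hl.trans hik).ne⟩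

end LinearOrder

theorem prod_Ioi_ite_eq_neg_one_pow_lehmerCode {n : ℕ} (σ : Perm (Fin n)) (i : Fin n) :
    ∏ j ∈ Ioi i, (if σ i < σ j then 1 else -1 : ℤˣ) = (-1) ^ σ.lehmerCode i := by
  rw [prod_ite, prod_const_one, prod_const, one_mul, lehmerCode]
  congr 2
  ext k
  simp only [mem_filter, mem_Ioi, mem_univ, true_and, not_lt]
  exact and_congr_right fun hik => (σ.injective.ne hik.ne').le_iff_lt

theorem sign_eq_neg_one_pow_sum_lehmerCode {n : ℕ} (σ : Perm (Fin n)) :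
    sign σ = (-1) ^ ∑ i, σ.lehmerCode i := by
  simp only [sign_eq_prod_prod_Ioi, prod_Ioi_ite_eq_neg_one_pow_lehmerCode, prod_pow_eq_pow_sum]

end Equiv.Perm

/-- For `σ ∈ S_n` and `0 ≤ n₀ ≤ n`, define
`sgn(σ(n₀|n)) = (-1)^{σ̄(1)+⋯+σ̄(n)}` where
`σ̄(i) = #{j ∈ {1,…,n₀} : j ∉ {σ(1),…,σ(i-1)}, j < σ(i)}`
(indices written `0`-based, so `j ∈ {1,…,n₀}` becomes `j.1 < n₀`).
Then `sgn(σ(n|n)) = sgn(σ)`, the usual sign of the permutation. -/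
theorem stmt19 (n : ℕ) (σ : Equiv.Perm (Fin n))
    (sbar : ℕ → Fin n → ℕ)
    (hsbar : ∀ (n₀ : ℕ) (i : Fin n), sbar n₀ i =
      (Finset.univ.filter (fun j : Fin n =>
        j.1 < n₀ ∧ j < σ i ∧ ∀ l : Fin n, l < i → σ l ≠ j)).card)
    (sgnGen : ℕ → ℤ)
    (hsgnGen : ∀ n₀ : ℕ, sgnGen n₀ = (-1 : ℤ) ^ (∑ i : Fin n, sbar n₀ i)) :
    sgnGen n = Equiv.Perm.sign σ := by
  have hsbar_n : ∀ i, sbar n i = σ.lehmerCode i := fun i => by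
    simp only [hsbar, Fin.is_lt, true_and]
    -- `convert` only reconciles the `Decidable` instances of the two filters
    convert σ.card_unvisited_lt_eq_lehmerCode i
  rw [hsgnGen, σ.sign_eq_neg_one_pow_sum_lehmerCode, Finset.sum_congr rfl fun i _ => hsbar_n i]
  push_cast
  rfl
end
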